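/- Let U be a convex subset of a normed space, q : U → ℝ convex, ω a differentiable convex function with Bregman divergence V(x,z) = ω(z) − ω(x) − ⟨∇ω(x), z − x⟩, points x̄, ȳ ∈ U, and scalars μ₁, μ₂ ≥ 0. If u* minimizes u ↦ q(u) + μ₁V(x̄,u) + μ₂V(ȳ,u) over U, then for all u ∈ U: q(u*) + μ₁V(x̄,u*) + μ₂V(ȳ,u*) ≤ q(u) + μ₁V(x̄,u) + μ₂V(ȳ,u) − (μ₁+μ₂)V(u*,u). -/

import Mathlib

/-!
Minimality of `u*` against the points `u* + t (u - u*)`, `t ∈ [0, 1]`, together with convexity of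
`q` along that segment, gives the first-order condition `q u* ≤ q u + ⟪∇φ u*, u - u*⟫` for the
smooth part `φ = μ₁ V(x̄, ·) + μ₂ V(ȳ, ·)`, whose gradient at `u*` is
`μ₁ (∇ω u* - ∇ω x̄) + μ₂ (∇ω u* - ∇ω ȳ)`. The three-point identity
`V(x, u) = V(x, u*) + V(u*, u) + ⟪∇ω u* - ∇ω x, u - u*⟫` turns this into the claim.
-/

open Set InnerProductSpace

theorem ConvexOn.map_add_smul_sub_le {𝕜 E : Type*} [Field 𝕜] [LinearOrder 𝕜]
    [IsStrictOrderedRing 𝕜] [AddCommGroup E] [Module 𝕜 E] {s : Set E} {f : E → 𝕜}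
    (hf : ConvexOn 𝕜 s f) {a u : E} (ha : a ∈ s) (hu : u ∈ s) {t : 𝕜} (ht : t ∈ Icc (0 : 𝕜) 1) :
    f (a + t • (u - a)) ≤ f a + t * (f u - f a) := by
  have h := hf.2 ha hu (sub_nonneg.2 ht.2) ht.1 (sub_add_cancel 1 t)
  rw [show (1 - t) • a + t • u = a + t • (u - a) by rw [smul_sub, sub_smul, one_smul]; abel] at h
  simp only [smul_eq_mul] at h
  linarith

theorem IsMinOn.le_add_fderiv_of_convexOn {E : Type*} [NormedAddCommGroup E] [NormedSpace ℝ E]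
    {s : Set E} {q φ : E → ℝ} {φ' : StrongDual ℝ E} {a u : E} (hmin : IsMinOn (q + φ) s a)
    (hs : Convex ℝ s) (hq : ConvexOn ℝ s q) (hφ : HasFDerivWithinAt φ φ' s a)
    (ha : a ∈ s) (hu : u ∈ s) : q a ≤ q u + φ' (u - a) := by
  -- By convexity of `q`, `q a + G t ≥ (q + φ) (a + t • (u - a))`, with equality at `t = 0`.
  set G : ℝ → ℝ := fun t ↦ φ (a + t • (u - a)) + t * (q u - q a)
  have hG : IsMinOn G (Icc 0 1) 0 := by
    refine isMinOn_iff.2 fun t ht ↦ ?_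
    have hmin_t := isMinOn_iff.1 hmin _ (hs.add_smul_sub_mem ha hu ht)
    have hq_t := hq.map_add_smul_sub_le ha hu ht
    simp only [G, Pi.add_apply, zero_smul, add_zero, zero_mul] at hmin_t ⊢
    linarith
  have hline : HasDerivWithinAt (fun t : ℝ ↦ a + t • (u - a)) (u - a) (Icc 0 1) 0 :=
    ((hasDerivWithinAt_id _ _).smul_const (u - a)).const_add a |>.congr_deriv (one_smul _ _)
  have hG' : HasDerivWithinAt G (φ' (u - a) + (q u - q a)) (Icc 0 1) 0 := by
    refine (hφ.comp_hasDerivWithinAt_of_eq 0 hline (fun t ht ↦ hs.add_smul_sub_mem ha hu ht)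
      (by simp)).add ?_
    simpa using (hasDerivWithinAt_id (0 : ℝ) (Icc 0 1)).mul_const (q u - q a)
  have hone : (1 : ℝ) ∈ posTangentConeAt (Icc 0 1) 0 :=
    mem_posTangentConeAt_of_segment_subset (by simp [segment_eq_Icc])
  have hderiv_nonneg := hG.localize.hasFDerivWithinAt_nonneg hG'.hasFDerivWithinAt hone
  rw [ContinuousLinearMap.toSpanSingleton_apply, one_smul] at hderiv_nonneg
  linarith

section Bregman

variable {H : Type*} [NormedAddCommGroup H] [InnerProductSpace ℝ H]

def bregmanDiv (ω : H → ℝ) (g : H → H) (x u : H) : ℝ :=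
  ω u - (ω x + inner ℝ (g x) (u - x))

theorem bregmanDiv_eq_add_bregmanDiv_add_inner (ω : H → ℝ) (g : H → H) (x w u : H) :
    bregmanDiv ω g x u =
      bregmanDiv ω g x w + bregmanDiv ω g w u + inner ℝ (g w - g x) (u - w) := by
  have hsplit : u - x = (u - w) + (w - x) := by abel
  simp only [bregmanDiv, hsplit, inner_add_right, inner_sub_left]
  ring

theorem hasGradientAt_bregmanDiv [CompleteSpace H] {ω : H → ℝ} {g : H → H} (x : H) {w : H}
    (hw : HasGradientAt ω (g w) w) : HasGradientAt (bregmanDiv ω g x) (g w - g x) w := by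
  rw [hasGradientAt_iff_hasFDerivAt, map_sub]
  have hlin : HasFDerivAt (fun u ↦ inner ℝ (g x) (u - x)) (toDual ℝ H (g x)) w := by
    simpa [Function.comp_def] using
      (toDual ℝ H (g x)).hasFDerivAt.comp w ((hasFDerivAt_id w).sub_const x)
  exact hw.sub (hlin.const_add (ω x))

end Bregman

theorem prox_mapping_optimality_general
    {H : Type*} [NormedAddCommGroup H] [InnerProductSpace ℝ H] [CompleteSpace H]
    (U : Set H) (hUc : Convex ℝ U)
    (q : H → ℝ) (hq : ConvexOn ℝ U q)
    (ω : H → ℝ) (g : H → H)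
    (hdiff : ∀ x ∈ U, HasGradientAt ω (g x) x)
    (V : H → H → ℝ)
    (hV : ∀ x u, V x u = ω u - (ω x + (inner ℝ (g x) (u - x) : ℝ)))
    (xb yb : H)
    (μ₁ μ₂ : ℝ)
    (ustar : H) (hustar : ustar ∈ U)
    (hmin : ∀ u ∈ U,
      q ustar + μ₁ * V xb ustar + μ₂ * V yb ustar ≤
        q u + μ₁ * V xb u + μ₂ * V yb u) :
    ∀ u ∈ U,
      q ustar + μ₁ * V xb ustar + μ₂ * V yb ustar ≤
        q u + μ₁ * V xb u + μ₂ * V yb u - (μ₁ + μ₂) * V ustar u := by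
  intro u hu
  obtain rfl : V = bregmanDiv ω g := funext₂ hV
  set φ : H → ℝ := fun v ↦ μ₁ * bregmanDiv ω g xb v + μ₂ * bregmanDiv ω g yb v
  have hφ : HasGradientAt φ (μ₁ • (g ustar - g xb) + μ₂ • (g ustar - g yb)) ustar := by
    rw [hasGradientAt_iff_hasFDerivAt, map_add, map_smul, map_smul]
    exact (hasGradientAt_bregmanDiv xb (hdiff ustar hustar)).hasFDerivAt.const_mul μ₁ |>.add
      ((hasGradientAt_bregmanDiv yb (hdiff ustar hustar)).hasFDerivAt.const_mul μ₂)
  have hvar := IsMinOn.le_add_fderiv_of_convexOn (φ := φ)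
    (isMinOn_iff.2 fun v hv ↦ by simpa [φ, add_assoc] using hmin v hv)
    hUc hq hφ.hasFDerivAt.hasFDerivWithinAt hustar hu
  simp only [toDual_apply_apply, inner_add_left, real_inner_smul_left] at hvar
  rw [bregmanDiv_eq_add_bregmanDiv_add_inner ω g xb ustar u,
    bregmanDiv_eq_add_bregmanDiv_add_inner ω g yb ustar u]
  linarith

theorem prox_mapping_optimality
    {H : Type*} [NormedAddCommGroup H] [InnerProductSpace ℝ H] [CompleteSpace H]
    (U : Set H) (hUc : Convex ℝ U) (hUcl : IsClosed U)
    (q : H → ℝ) (hq : ConvexOn ℝ U q)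
    (ω : H → ℝ) (g : H → H)
    (hω : ConvexOn ℝ U ω)
    (hdiff : ∀ x ∈ U, HasGradientAt ω (g x) x)
    (V : H → H → ℝ)
    (hV : ∀ x u, V x u = ω u - (ω x + (inner ℝ (g x) (u - x) : ℝ)))
    (xb yb : H) (hxb : xb ∈ U) (hyb : yb ∈ U)
    (μ₁ μ₂ : ℝ) (hμ₁ : 0 ≤ μ₁) (hμ₂ : 0 ≤ μ₂)
    (ustar : H) (hustar : ustar ∈ U)
    (hmin : ∀ u ∈ U,
      q ustar + μ₁ * V xb ustar + μ₂ * V yb ustar ≤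
        q u + μ₁ * V xb u + μ₂ * V yb u) :
    ∀ u ∈ U,
      q ustar + μ₁ * V xb ustar + μ₂ * V yb ustar ≤
        q u + μ₁ * V xb u + μ₂ * V yb u - (μ₁ + μ₂) * V ustar u :=
  prox_mapping_optimality_general U hUc q hq ω g hdiff V hV xb yb μ₁ μ₂ ustar hustar hmin
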